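/- Let K > 0 and γ_K the Gaussian measure on ℝ with density φ_K(x) = √(K/(2π)) exp(-K x²/2). If a ∈ ℝ and f(x) = exp(a x - a²/(2K)), then f > 0, ∫ f dγ_K = 1, and equality holds in the logarithmic Sobolev inequality: ∫ f log f dγ_K = (1/(2K)) ∫ (f')²/f dγ_K = a²/(2K). -/
import Mathlib

open MeasureTheory Real
open scoped ENNReal NNReal

/-- Gaussian density `φ_K(x) = √(K/(2π)) exp(-K x²/2)`. -/
noncomputable def phiK (K x : ℝ) : ℝ := Real.sqrt (K / (2 * Real.pi)) * Real.exp (-K * x ^ 2 / 2)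

/-- The Gaussian probability measure `γ_K` on `ℝ` with density `φ_K`. -/
noncomputable def gaussK (K : ℝ) : Measure ℝ :=
  volume.withDensity fun x => ENNReal.ofReal (phiK K x)

lemma phiK_pos {K : ℝ} (hK : 0 < K) (x : ℝ) : 0 < phiK K x := by
  unfold phiK
  positivity

lemma phiK_continuous (K : ℝ) : Continuous (phiK K) := by
  unfold phiK
  fun_prop

lemma integral_gaussK (K : ℝ) (hK : 0 < K) (g : ℝ → ℝ) :
    ∫ x, g x ∂gaussK K = ∫ x, phiK K x * g x := by
  rw [gaussK]
  have hm : Measurable fun x => (phiK K x).toNNReal :=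
    ((phiK_continuous K).measurable).real_toNNReal
  rw [show (fun x => ENNReal.ofReal (phiK K x)) = fun x => ((phiK K x).toNNReal : ℝ≥0∞) from rfl,
    integral_withDensity_eq_integral_smul hm]
  congr 1
  ext x
  simp [NNReal.smul_def, Real.coe_toNNReal _ (phiK_pos hK x).le]

lemma integral_phiK (K : ℝ) (hK : 0 < K) : ∫ x, phiK K x = 1 := by
  unfold phiK
  rw [integral_const_mul]
  have h2 : ∀ x : ℝ, Real.exp (-K * x ^ 2 / 2) = Real.exp (-(K/2) * x ^ 2) := by
    intro x; ring_nf
  simp_rw [h2]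
  rw [integral_gaussian]
  rw [← Real.sqrt_mul (by positivity)]
  rw [show K / (2 * π) * (π / (K / 2)) = 1 by field_simp]
  exact Real.sqrt_one

lemma integrable_phiK (K : ℝ) (hK : 0 < K) : Integrable (phiK K) := by
  unfold phiK
  have h2 : ∀ x : ℝ, Real.exp (-K * x ^ 2 / 2) = Real.exp (-(K/2) * x ^ 2) := by
    intro x; ring_nf
  simp_rw [h2]
  exact (integrable_exp_neg_mul_sq (by positivity)).const_mul _

lemma integrable_id_phiK (K : ℝ) (hK : 0 < K) : Integrable (fun x => x * phiK K x) := by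
  unfold phiK
  have h2 : ∀ x : ℝ, x * (Real.sqrt (K / (2*π)) * Real.exp (-K * x ^ 2 / 2))
      = Real.sqrt (K / (2*π)) * (x * Real.exp (-(K/2) * x ^ 2)) := by
    intro x; ring_nf
  simp_rw [h2]
  exact (integrable_mul_exp_neg_mul_sq (show (0:ℝ) < K/2 by positivity)).const_mul _

lemma integral_id_phiK (K : ℝ) (hK : 0 < K) : ∫ x, x * phiK K x = 0 := by
  have hodd := integral_neg_eq_self (fun x : ℝ => x * phiK K x) (volume : Measure ℝ)
  have hsym : ∀ x : ℝ, phiK K (-x) = phiK K x := fun x => by simp [phiK]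
  simp only [hsym, neg_mul, integral_neg] at hodd
  linarith

theorem gaussian_log_sobolev_extremal (K : ℝ) (hK : 0 < K) (a : ℝ)
    (f : ℝ → ℝ) (hf : ∀ x, f x = Real.exp (a * x - a ^ 2 / (2 * K))) :
    (∀ x, 0 < f x) ∧
    (∫ x, f x ∂gaussK K = 1) ∧
    (∫ x, f x * Real.log (f x) ∂gaussK K = a ^ 2 / (2 * K)) ∧
    ((1 / (2 * K)) * ∫ x, deriv f x ^ 2 / f x ∂gaussK K = a ^ 2 / (2 * K)) := by
  have hK0 : K ≠ 0 := ne_of_gt hK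
  set m := a / K with hm
  have hfpos : ∀ x, 0 < f x := fun x => by rw [hf x]; exact Real.exp_pos _
  -- key identity
  have hkey : ∀ x, phiK K x * f x = phiK K (x - m) := by
    intro x
    rw [hf x]
    unfold phiK
    rw [mul_assoc, ← Real.exp_add]
    congr 2
    rw [hm]
    field_simp
    ring
  -- integral of shifted density is 1
  have hshift : ∫ x, phiK K (x - m) = 1 := by
    rw [integral_sub_right_eq_self (phiK K) m]
    exact integral_phiK K hK
  -- first moment of shifted density
  have hmoment : ∫ x, x * phiK K (x - m) = m := by
    have h1 : ∫ x, (x + m) * phiK K x = ∫ x, x * phiK K (x - m) := by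
      have h := integral_add_right_eq_self (μ := volume) (fun y => y * phiK K (y - m)) m
      simpa using h
    rw [← h1]
    have h2 : ∀ x : ℝ, (x + m) * phiK K x = x * phiK K x + m * phiK K x := fun x => by ring
    simp_rw [h2]
    rw [integral_add (integrable_id_phiK K hK) ((integrable_phiK K hK).const_mul m),
      integral_id_phiK K hK, integral_const_mul, integral_phiK K hK]
    simp
  -- integrability of x * phiK(x-m)
  have hint_id : Integrable (fun x => x * phiK K (x - m)) := by
    have hint0 : Integrable (fun y => (y + m) * phiK K y) :=
      ((integrable_id_phiK K hK).add ((integrable_phiK K hK).const_mul m)).congr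
        (Filter.Eventually.of_forall fun y => by simp [add_mul])
    have h := hint0.comp_sub_right m
    simpa [sub_add_cancel] using h
  have hint_phi_shift : Integrable (fun x => phiK K (x - m)) :=
    (integrable_phiK K hK).comp_sub_right m
  -- part 2
  have h2 : ∫ x, f x ∂gaussK K = 1 := by
    rw [integral_gaussK K hK]
    simp_rw [hkey]
    exact hshift
  -- part 3
  have h3 : ∫ x, f x * Real.log (f x) ∂gaussK K = a ^ 2 / (2 * K) := by
    rw [integral_gaussK K hK]
    have : ∀ x, phiK K x * (f x * Real.log (f x))
        = a * (x * phiK K (x - m)) - (a ^ 2 / (2 * K)) * phiK K (x - m) := by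
      intro x
      have hlog : Real.log (f x) = a * x - a ^ 2 / (2 * K) := by
        rw [hf x, Real.log_exp]
      rw [show phiK K x * (f x * Real.log (f x)) = (phiK K x * f x) * Real.log (f x) by ring,
        hkey x, hlog]
      ring
    simp_rw [this]
    rw [integral_sub (hint_id.const_mul a) (hint_phi_shift.const_mul _),
      integral_const_mul, integral_const_mul, hmoment, hshift]
    rw [hm]
    field_simp
    ring
  -- derivative
  have hderiv : ∀ x, deriv f x = a * f x := by
    intro x
    have hfe : f = fun x => Real.exp (a * x - a ^ 2 / (2 * K)) := funext hf
    rw [hfe]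
    have h : HasDerivAt (fun x : ℝ => Real.exp (a * x - a ^ 2 / (2 * K)))
        (Real.exp (a * x - a ^ 2 / (2 * K)) * a) x := by
      have h1 : HasDerivAt (fun x : ℝ => a * x - a ^ 2 / (2 * K)) a x := by
        simpa using ((hasDerivAt_id x).const_mul a).sub_const (a ^ 2 / (2 * K))
      exact h1.exp
    rw [h.deriv]
    ring
  -- part 4
  have h4 : (1 / (2 * K)) * ∫ x, deriv f x ^ 2 / f x ∂gaussK K = a ^ 2 / (2 * K) := by
    have : ∀ x, deriv f x ^ 2 / f x = a ^ 2 * f x := by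
      intro x
      rw [hderiv x]
      field_simp [(hfpos x).ne']
    simp_rw [this]
    rw [integral_const_mul, h2]
    field_simp
  exact ⟨hfpos, h2, h3, h4⟩
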